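/- Factorization of the classical linearization sum (Corollary 3.5): for every q ∈ ℂ with |q| < 1, all x, y ∈ ℂ, and all integers n, m ≥ 0, ∑_{k=0}^{min(n,m)} [n,k]_q [m,k]_q (q;q)_k x^k h_{n+m-2k}(x|q) = ( ∑_{k=0}^{n} [n,k]_q y^k h_{n-k}(x,y|q) ) · ( ∑_{j=0}^{m} [m,j]_q y^j h_{m-j}(x,y|q) ). -/
import Mathlib


/-- The q-shifted factorial `(a;q)_n = ∏_{k=0}^{n-1} (1 - a q^k)`. -/
noncomputable def qPoch (a q : ℂ) (n : ℕ) : ℂ :=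
  ∏ k ∈ Finset.range n, (1 - a * q ^ k)

/-- The infinite q-shifted factorial `(a;q)_∞ = ∏_{k=0}^{∞} (1 - a q^k)`. -/
noncomputable def qPochInf (a q : ℂ) : ℂ :=
  ∏' k : ℕ, (1 - a * q ^ k)

/-- The Gaussian binomial coefficient `[n,k]_q`. -/
noncomputable def qBinom (q : ℂ) (n k : ℕ) : ℂ :=
  qPoch q q n / (qPoch q q k * qPoch q q (n - k))

/-- The Cauchy polynomial `P_n(x,y) = ∏_{k=0}^{n-1} (x - q^k y)`. -/
noncomputable def cauchyP (q x y : ℂ) (n : ℕ) : ℂ :=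
  ∏ k ∈ Finset.range n, (x - q ^ k * y)

/-- The bivariate Rogers–Szegő polynomial `h_n(x,y|q)`. -/
noncomputable def hRS2 (q x y : ℂ) (n : ℕ) : ℂ :=
  ∑ k ∈ Finset.range (n + 1), qBinom q n k * cauchyP q x y k

/-- The Rogers–Szegő polynomial `h_n(x|q)`. -/
noncomputable def hRS (q x : ℂ) (n : ℕ) : ℂ :=
  ∑ k ∈ Finset.range (n + 1), qBinom q n k * x ^ k

/-- The continuous big q-Hermite polynomial `H_n(cos θ; a | q)`. -/
noncomputable def bigH (q a θ : ℂ) (n : ℕ) : ℂ :=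
  ∑ k ∈ Finset.range (n + 1),
    qBinom q n k * qPoch (a * Complex.exp (Complex.I * θ)) q k *
      Complex.exp (Complex.I * ((n : ℂ) - 2 * (k : ℂ)) * θ)



lemma one_sub_pow_ne (q : ℂ) (hq : ‖q‖ < 1) (k : ℕ) : (1 : ℂ) - q * q ^ k ≠ 0 := by
  have h : ‖q * q ^ k‖ < 1 := by
    rw [norm_mul, norm_pow]
    calc ‖q‖ * ‖q‖ ^ k ≤ ‖q‖ * 1 := by
          apply mul_le_mul_of_nonneg_left _ (norm_nonneg q)
          exact pow_le_one₀ (norm_nonneg q) hq.le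
      _ = ‖q‖ := mul_one _
      _ < 1 := hq
  intro h0
  have : q * q ^ k = 1 := by linear_combination -h0
  rw [this] at h; simp at h

lemma qPoch_ne (q : ℂ) (hq : ‖q‖ < 1) (n : ℕ) : qPoch q q n ≠ 0 := by
  unfold qPoch
  exact Finset.prod_ne_zero_iff.2 fun k _ => one_sub_pow_ne q hq k

lemma qPoch_succ (a q : ℂ) (n : ℕ) : qPoch a q (n + 1) = qPoch a q n * (1 - a * q ^ n) :=
  Finset.prod_range_succ _ _

lemma qPoch_zero (a q : ℂ) : qPoch a q 0 = 1 := rfl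

noncomputable def Bb (q : ℂ) (n k : ℕ) : ℂ := if k ≤ n then qBinom q n k else 0

lemma Bb_val (q : ℂ) (a b : ℕ) :
    Bb q (a + b) a = qPoch q q (a + b) / (qPoch q q a * qPoch q q b) := by
  unfold Bb qBinom
  rw [if_pos (Nat.le_add_right a b), Nat.add_sub_cancel_left]

lemma Bb_of_lt (q : ℂ) {n k : ℕ} (h : n < k) : Bb q n k = 0 := by
  unfold Bb; rw [if_neg (by omega)]

lemma Bb_zero (q : ℂ) (hq : ‖q‖ < 1) (n : ℕ) : Bb q n 0 = 1 := by
  have := Bb_val q 0 n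
  simpa [qPoch_zero, qPoch_ne q hq n] using this

lemma Bb_self (q : ℂ) (hq : ‖q‖ < 1) (n : ℕ) : Bb q n n = 1 := by
  have := Bb_val q n 0
  simpa [qPoch_zero, qPoch_ne q hq n] using this

lemma Bb_eq_qBinom (q : ℂ) {n k : ℕ} (h : k ≤ n) : Bb q n k = qBinom q n k := if_pos h

lemma pascal2 (q : ℂ) (hq : ‖q‖ < 1) (n k : ℕ) :
    Bb q (n + 1) (k + 1) = q ^ (k + 1) * Bb q n (k + 1) + Bb q n k := by
  rcases (by omega : n < k ∨ n = k ∨ k + 1 ≤ n) with h | h | h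
  · rw [Bb_of_lt q (by omega), Bb_of_lt q (by omega), Bb_of_lt q (by omega)]; ring
  · subst h
    rw [Bb_self q hq, Bb_self q hq, Bb_of_lt q (by omega)]; ring
  · obtain ⟨r, rfl⟩ : ∃ r, n = k + 1 + r := ⟨n - (k + 1), by omega⟩
    have bv1 : Bb q (k + 1 + r + 1) (k + 1) =
        qPoch q q (k + 1 + r + 1) / (qPoch q q (k + 1) * qPoch q q (r + 1)) := by
      rw [show k + 1 + r + 1 = k + 1 + (r + 1) from by omega]
      exact Bb_val q (k + 1) (r + 1)
    have bv2 := Bb_val q (k + 1) r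
    have bv3 : Bb q (k + 1 + r) k =
        qPoch q q (k + 1 + r) / (qPoch q q k * qPoch q q (r + 1)) := by
      rw [show k + 1 + r = k + (r + 1) from by omega]
      exact Bb_val q k (r + 1)
    rw [bv1, bv2, bv3, qPoch_succ q q (k + 1 + r), qPoch_succ q q k, qPoch_succ q q r]
    have hk := qPoch_ne q hq k
    have hr := qPoch_ne q hq r
    have hn := qPoch_ne q hq (k + 1 + r)
    have h1 := one_sub_pow_ne q hq k
    have h2 := one_sub_pow_ne q hq r
    field_simp
    ring

lemma pascal1 (q : ℂ) (hq : ‖q‖ < 1) (n k : ℕ) :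
    Bb q (n + 1) (k + 1) = Bb q n (k + 1) + q ^ (n - k) * Bb q n k := by
  rcases (by omega : n < k ∨ n = k ∨ k + 1 ≤ n) with h | h | h
  · rw [Bb_of_lt q (by omega), Bb_of_lt q (by omega), Bb_of_lt q (by omega)]; ring
  · subst h
    rw [Bb_self q hq, Bb_self q hq, Bb_of_lt q (by omega), Nat.sub_self]; ring
  · obtain ⟨r, rfl⟩ : ∃ r, n = k + 1 + r := ⟨n - (k + 1), by omega⟩
    rw [show k + 1 + r - k = r + 1 from by omega]
    have bv1 : Bb q (k + 1 + r + 1) (k + 1) =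
        qPoch q q (k + 1 + r + 1) / (qPoch q q (k + 1) * qPoch q q (r + 1)) := by
      rw [show k + 1 + r + 1 = k + 1 + (r + 1) from by omega]
      exact Bb_val q (k + 1) (r + 1)
    have bv2 := Bb_val q (k + 1) r
    have bv3 : Bb q (k + 1 + r) k =
        qPoch q q (k + 1 + r) / (qPoch q q k * qPoch q q (r + 1)) := by
      rw [show k + 1 + r = k + (r + 1) from by omega]
      exact Bb_val q k (r + 1)
    rw [bv1, bv2, bv3, qPoch_succ q q (k + 1 + r), qPoch_succ q q k, qPoch_succ q q r]
    have hk := qPoch_ne q hq k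
    have hr := qPoch_ne q hq r
    have hn := qPoch_ne q hq (k + 1 + r)
    have h1 := one_sub_pow_ne q hq k
    have h2 := one_sub_pow_ne q hq r
    field_simp
    ring

lemma Bb_shift (q : ℂ) (hq : ‖q‖ < 1) (n k : ℕ) :
    (1 - q ^ (n - k)) * Bb q n k = (1 - q ^ n) * Bb q (n - 1) k := by
  rcases (by omega : n < k ∨ (n = k ∧ n = 0) ∨ (n = k ∧ 1 ≤ n) ∨ k + 1 ≤ n)
    with h | ⟨h, h0⟩ | ⟨h, h0⟩ | h
  · rw [Bb_of_lt q h, Bb_of_lt q (by omega)]; ring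
  · subst h; subst h0; simp
  · subst h
    have hz : Bb q (n - 1) n = 0 := Bb_of_lt q (by omega)
    rw [Nat.sub_self, hz]
    simp
  · obtain ⟨r, rfl⟩ : ∃ r, n = k + (r + 1) := ⟨n - k - 1, by omega⟩
    rw [show k + (r + 1) - k = r + 1 from by omega,
      show k + (r + 1) - 1 = k + r from by omega]
    have bv1 := Bb_val q k (r + 1)
    have bv2 := Bb_val q k r
    rw [bv1, bv2, show k + (r + 1) = (k + r) + 1 from by omega, qPoch_succ q q (k + r),
      qPoch_succ q q r]
    have hk := qPoch_ne q hq k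
    have hr := qPoch_ne q hq r
    have hn := qPoch_ne q hq (k + r)
    have h2 := one_sub_pow_ne q hq r
    have h3 := one_sub_pow_ne q hq (k + r)
    field_simp
    ring


lemma hRS_Bb (q x : ℂ) (n : ℕ) :
    hRS q x n = ∑ k ∈ Finset.range (n + 1), Bb q n k * x ^ k :=
  Finset.sum_congr rfl fun k hk => by
    rw [Bb_eq_qBinom q (Nat.lt_succ_iff.1 (Finset.mem_range.1 hk))]

lemma hRS_Bb' (q x : ℂ) {n t : ℕ} (h : n + 1 ≤ t) :
    hRS q x n = ∑ k ∈ Finset.range t, Bb q n k * x ^ k := by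
  rw [hRS_Bb]
  exact Finset.sum_subset (Finset.range_subset_range.2 h) fun k _ hk => by
    rw [Bb_of_lt q (by simpa using hk), zero_mul]

lemma hRS_zero (q x : ℂ) (hq : ‖q‖ < 1) : hRS q x 0 = 1 := by
  rw [hRS_Bb]; simp [Bb_zero q hq]

lemma hRS_one (q x : ℂ) (hq : ‖q‖ < 1) : hRS q x 1 = 1 + x := by
  rw [hRS_Bb, Finset.sum_range_succ, Finset.sum_range_one, Bb_zero q hq, Bb_self q hq]
  ring

lemma hRS_rec (q x : ℂ) (hq : ‖q‖ < 1) (N : ℕ) :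
    hRS q x (N + 1) = (1 + x) * hRS q x N - (1 - q ^ N) * x * hRS q x (N - 1) := by
  rw [hRS_Bb q x (N + 1), Finset.sum_range_succ']
  rw [Bb_zero q hq]
  have step : ∀ k ∈ Finset.range (N + 1),
      Bb q (N + 1) (k + 1) * x ^ (k + 1) =
      Bb q N (k + 1) * x ^ (k + 1) +
        (Bb q N k * x ^ k - (1 - q ^ N) * (Bb q (N - 1) k * x ^ k)) * x := by
    intro k _
    have p1 := pascal1 q hq N k
    have p2 := Bb_shift q hq N k
    have hs : q ^ (N - k) * Bb q N k = Bb q N k - (1 - q ^ N) * Bb q (N - 1) k := by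
      linear_combination -p2
    rw [p1, hs]; ring
  rw [Finset.sum_congr rfl step, Finset.sum_add_distrib]
  have A : ∑ k ∈ Finset.range (N + 1), Bb q N (k + 1) * x ^ (k + 1) = hRS q x N - 1 := by
    have h1 := Finset.sum_range_succ' (fun k => Bb q N k * x ^ k) (N + 1)
    rw [← hRS_Bb' q x (by omega : N + 1 ≤ N + 1 + 1), Bb_zero q hq] at h1
    rw [pow_zero] at h1
    linear_combination -h1
  have B : ∑ k ∈ Finset.range (N + 1),
      (Bb q N k * x ^ k - (1 - q ^ N) * (Bb q (N - 1) k * x ^ k)) * x =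
      (hRS q x N - (1 - q ^ N) * hRS q x (N - 1)) * x := by
    rw [← Finset.sum_mul, Finset.sum_sub_distrib, ← Finset.mul_sum,
      ← hRS_Bb q x N, ← hRS_Bb' q x (by omega : N - 1 + 1 ≤ N + 1)]
  rw [A, B]
  ring

lemma trinA (q : ℂ) (hq : ‖q‖ < 1) (n j k : ℕ) :
    Bb q n k * Bb q (n - k) j = Bb q n j * Bb q (n - j) k := by
  have main : ∀ a b : ℕ, a + b ≤ n →
      Bb q n a * Bb q (n - a) b = qPoch q q n /
        (qPoch q q a * qPoch q q b * qPoch q q (n - a - b)) := by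
    intro a b hab
    obtain ⟨r, rfl⟩ : ∃ r, n = a + (b + r) := ⟨n - a - b, by omega⟩
    rw [Bb_val, show a + (b + r) - a = b + r from by omega, Bb_val,
      show b + r - b = r from by omega]
    have h1 := qPoch_ne q hq a
    have h2 := qPoch_ne q hq b
    have h3 := qPoch_ne q hq r
    have h4 := qPoch_ne q hq (b + r)
    field_simp
  rcases (by omega : k + j ≤ n ∨ n < k + j) with h | h
  · rw [main k j h, main j k (by omega), show n - k - j = n - j - k from by omega,
      mul_comm (qPoch q q k) (qPoch q q j)]
  · have z1 : Bb q n k * Bb q (n - k) j = 0 := by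
      rcases (by omega : n < k ∨ (k ≤ n ∧ n - k < j)) with hk | ⟨_, hj⟩
      · rw [Bb_of_lt q hk, zero_mul]
      · rw [Bb_of_lt q hj, mul_zero]
    have z2 : Bb q n j * Bb q (n - j) k = 0 := by
      rcases (by omega : n < j ∨ (j ≤ n ∧ n - j < k)) with hk | ⟨_, hj⟩
      · rw [Bb_of_lt q hk, zero_mul]
      · rw [Bb_of_lt q hj, mul_zero]
    rw [z1, z2]

lemma trinB (q : ℂ) (hq : ‖q‖ < 1) (n j i : ℕ) :
    Bb q n (j + i) * Bb q (j + i) j = Bb q n j * Bb q (n - j) i := by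
  rcases (by omega : j + i ≤ n ∨ n < j + i) with h | h
  · obtain ⟨r, rfl⟩ : ∃ r, n = j + i + r := ⟨n - (j + i), by omega⟩
    rw [Bb_val, Bb_val, show j + i + r - j = i + r from by omega]
    have e : j + i + r = j + (i + r) := by omega
    rw [e, Bb_val, ← e, Bb_val]
    have h1 := qPoch_ne q hq i
    have h2 := qPoch_ne q hq j
    have h3 := qPoch_ne q hq r
    have h4 := qPoch_ne q hq (j + i)
    have h5 := qPoch_ne q hq (i + r)
    field_simp
  · rw [Bb_of_lt q h, zero_mul]
    rcases (by omega : n < j ∨ (j ≤ n ∧ n - j < i)) with hk | ⟨_, hj⟩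
    · rw [Bb_of_lt q hk, zero_mul]
    · rw [Bb_of_lt q hj, mul_zero]


lemma cauchyP_succ (q x y : ℂ) (n : ℕ) :
    cauchyP q x y (n + 1) = cauchyP q x y n * (x - q ^ n * y) :=
  Finset.prod_range_succ _ _

lemma cauchy_exp (q x y : ℂ) (hq : ‖q‖ < 1) (i : ℕ) :
    x ^ i = ∑ j ∈ Finset.range (i + 1), Bb q i j * cauchyP q x y j * y ^ (i - j) := by
  induction i with
  | zero => simp [Bb_zero q hq, cauchyP]
  | succ i ih =>
    have lhs_eq : x ^ (i + 1) =
        (∑ j ∈ Finset.range (i + 1), Bb q i j * cauchyP q x y (j + 1) * y ^ (i - j)) +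
        ∑ j ∈ Finset.range (i + 1), q ^ j * Bb q i j * cauchyP q x y j * y ^ (i + 1 - j) := by
      rw [pow_succ, ih, Finset.sum_mul, ← Finset.sum_add_distrib]
      refine Finset.sum_congr rfl fun j hj => ?_
      have hji : j ≤ i := Nat.lt_succ_iff.1 (Finset.mem_range.1 hj)
      rw [cauchyP_succ, show i + 1 - j = (i - j) + 1 from by omega, pow_succ]
      ring
    rw [lhs_eq, Finset.sum_range_succ' (fun j => Bb q (i + 1) j * cauchyP q x y j * y ^ (i + 1 - j)) (i + 1)]
    have rhs1 : ∀ j ∈ Finset.range (i + 1),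
        Bb q (i + 1) (j + 1) * cauchyP q x y (j + 1) * y ^ (i + 1 - (j + 1)) =
        Bb q i j * cauchyP q x y (j + 1) * y ^ (i - j) +
          q ^ (j + 1) * Bb q i (j + 1) * cauchyP q x y (j + 1) * y ^ (i - j) := by
      intro j _
      rw [pascal2 q hq i j, show i + 1 - (j + 1) = i - j from by omega]
      ring
    rw [Finset.sum_congr rfl rhs1, Finset.sum_add_distrib]
    have s2 : ∑ j ∈ Finset.range (i + 1), q ^ j * Bb q i j * cauchyP q x y j * y ^ (i + 1 - j) =
        (∑ j ∈ Finset.range (i + 1),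
          q ^ (j + 1) * Bb q i (j + 1) * cauchyP q x y (j + 1) * y ^ (i - j)) +
        y ^ (i + 1) := by
      rw [Finset.sum_range_succ'
        (fun j => q ^ j * Bb q i j * cauchyP q x y j * y ^ (i + 1 - j)) i]
      have top : q ^ (i + 1) * Bb q i (i + 1) * cauchyP q x y (i + 1) * y ^ (i - i) = 0 := by
        rw [Bb_of_lt q (by omega)]; ring
      rw [Finset.sum_range_succ
        (fun j => q ^ (j + 1) * Bb q i (j + 1) * cauchyP q x y (j + 1) * y ^ (i - j)) i, top]
      have hcongr : ∀ j ∈ Finset.range i,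
          q ^ (j + 1) * Bb q i (j + 1) * cauchyP q x y (j + 1) * y ^ (i + 1 - (j + 1)) =
          q ^ (j + 1) * Bb q i (j + 1) * cauchyP q x y (j + 1) * y ^ (i - j) := by
        intro j _
        rw [show i + 1 - (j + 1) = i - j from by omega]
      rw [Finset.sum_congr rfl hcongr]
      simp [Bb_zero q hq, cauchyP]
    rw [s2]
    simp [Bb_zero q hq, cauchyP]
    ring


lemma hRS2_Bb' (q x y : ℂ) {n t : ℕ} (h : n + 1 ≤ t) :
    hRS2 q x y n = ∑ k ∈ Finset.range t, Bb q n k * cauchyP q x y k := by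
  have e : hRS2 q x y n = ∑ k ∈ Finset.range (n + 1), Bb q n k * cauchyP q x y k :=
    Finset.sum_congr rfl fun k hk => by
      rw [Bb_eq_qBinom q (Nat.lt_succ_iff.1 (Finset.mem_range.1 hk))]
  rw [e]
  exact Finset.sum_subset (Finset.range_subset_range.2 h) fun k _ hk => by
    rw [Bb_of_lt q (by simpa using hk), zero_mul]

lemma cauchy_exp' (q x y : ℂ) (hq : ‖q‖ < 1) {i t : ℕ} (h : i + 1 ≤ t) :
    x ^ i = ∑ j ∈ Finset.range t, Bb q i j * cauchyP q x y j * y ^ (i - j) := by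
  rw [cauchy_exp q x y hq i]
  exact Finset.sum_subset (Finset.range_subset_range.2 h) fun k _ hk => by
    rw [Bb_of_lt q (by simpa using hk), zero_mul, zero_mul]

lemma factorA (q x y : ℂ) (hq : ‖q‖ < 1) (n : ℕ) :
    ∑ k ∈ Finset.range (n + 1), qBinom q n k * y ^ k * hRS2 q x y (n - k) =
      hRS q x n := by
  have lhs_eq : ∑ k ∈ Finset.range (n + 1), qBinom q n k * y ^ k * hRS2 q x y (n - k) =
      ∑ j ∈ Finset.range (n + 1), Bb q n j * cauchyP q x y j * hRS q y (n - j) := by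
    have e1 : ∀ k ∈ Finset.range (n + 1),
        qBinom q n k * y ^ k * hRS2 q x y (n - k) =
        ∑ j ∈ Finset.range (n + 1), Bb q n k * y ^ k * (Bb q (n - k) j * cauchyP q x y j) := by
      intro k hk
      have hkn : k ≤ n := Nat.lt_succ_iff.1 (Finset.mem_range.1 hk)
      rw [← Bb_eq_qBinom q hkn, hRS2_Bb' q x y (by omega : n - k + 1 ≤ n + 1),
        Finset.mul_sum]
    rw [Finset.sum_congr rfl e1, Finset.sum_comm]
    refine Finset.sum_congr rfl fun j hj => ?_
    have e2 : ∀ k ∈ Finset.range (n + 1),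
        Bb q n k * y ^ k * (Bb q (n - k) j * cauchyP q x y j) =
        Bb q n j * cauchyP q x y j * (Bb q (n - j) k * y ^ k) := by
      intro k _
      have := trinA q hq n j k
      linear_combination y ^ k * cauchyP q x y j * this
    rw [Finset.sum_congr rfl e2, ← Finset.mul_sum,
      ← hRS_Bb' q y (by omega : n - j + 1 ≤ n + 1)]
  rw [lhs_eq, hRS_Bb q x n]
  have e3 : ∀ i ∈ Finset.range (n + 1),
      Bb q n i * x ^ i =
      ∑ j ∈ Finset.range (n + 1), Bb q n i * Bb q i j * y ^ (i - j) * cauchyP q x y j := by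
    intro i hi
    have hin : i ≤ n := Nat.lt_succ_iff.1 (Finset.mem_range.1 hi)
    rw [cauchy_exp' q x y hq (by omega : i + 1 ≤ n + 1), Finset.mul_sum]
    exact Finset.sum_congr rfl fun j _ => by ring
  rw [Finset.sum_congr rfl e3, Finset.sum_comm]
  refine Finset.sum_congr rfl fun j hj => ?_
  have hjn : j ≤ n := Nat.lt_succ_iff.1 (Finset.mem_range.1 hj)
  have key : ∑ i ∈ Finset.range (n + 1), Bb q n i * Bb q i j * y ^ (i - j) =
      Bb q n j * hRS q y (n - j) := by
    have hsplit := Finset.sum_range_add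
      (fun i => Bb q n i * Bb q i j * y ^ (i - j)) j (n + 1 - j)
    rw [show j + (n + 1 - j) = n + 1 from by omega] at hsplit
    rw [hsplit]
    have z1 : ∑ i ∈ Finset.range j, Bb q n i * Bb q i j * y ^ (i - j) = 0 := by
      apply Finset.sum_eq_zero
      intro i hi
      rw [Bb_of_lt q (Finset.mem_range.1 hi), mul_zero, zero_mul]
    rw [z1, zero_add]
    have e4 : ∀ i ∈ Finset.range (n + 1 - j),
        Bb q n (j + i) * Bb q (j + i) j * y ^ (j + i - j) =
        Bb q n j * (Bb q (n - j) i * y ^ i) := by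
      intro i _
      rw [show j + i - j = i from by omega]
      have := trinB q hq n j i
      linear_combination y ^ i * this
    rw [Finset.sum_congr rfl e4, ← Finset.mul_sum]
    rw [show n + 1 - j = (n - j) + 1 from by omega, ← hRS_Bb q y (n - j)]
  calc Bb q n j * cauchyP q x y j * hRS q y (n - j)
      = (∑ i ∈ Finset.range (n + 1), Bb q n i * Bb q i j * y ^ (i - j)) * cauchyP q x y j := by
        rw [key]; ring
    _ = ∑ i ∈ Finset.range (n + 1), Bb q n i * Bb q i j * y ^ (i - j) * cauchyP q x y j :=
        Finset.sum_mul _ _ _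

noncomputable def Cc (q : ℂ) (m N k : ℕ) : ℂ := Bb q N k * Bb q m k * qPoch q q k

lemma Cc_zero (q : ℂ) (hq : ‖q‖ < 1) (m N : ℕ) : Cc q m N 0 = Bb q m 0 * 1 := by
  unfold Cc
  rw [Bb_zero q hq, qPoch_zero]
  ring

lemma Cc_of_lt (q : ℂ) {m N k : ℕ} (h : N < k) : Cc q m N k = 0 := by
  unfold Cc
  rw [Bb_of_lt q h, zero_mul, zero_mul]

lemma auxM (q : ℂ) (hq : ‖q‖ < 1) (m k : ℕ) :
    Bb q m (k + 1) * qPoch q q (k + 1) =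
      Bb q m k * qPoch q q k * (1 - q ^ (m - k)) := by
  rcases (by omega : k + 1 ≤ m ∨ k = m ∨ m < k) with h | h | h
  · obtain ⟨r, rfl⟩ : ∃ r, m = k + (r + 1) := ⟨m - k - 1, by omega⟩
    have bv1 : Bb q (k + (r + 1)) (k + 1) =
        qPoch q q (k + (r + 1)) / (qPoch q q (k + 1) * qPoch q q r) := by
      rw [show k + (r + 1) = (k + 1) + r from by omega]
      exact Bb_val q (k + 1) r
    rw [bv1, Bb_val, show k + (r + 1) - k = r + 1 from by omega, qPoch_succ q q r]
    have h1 := qPoch_ne q hq k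
    have h2 := qPoch_ne q hq r
    have h3 := qPoch_ne q hq (k + 1)
    have h4 := one_sub_pow_ne q hq r
    field_simp
    ring
  · subst h
    rw [Bb_of_lt q (by omega), Nat.sub_self]
    simp
  · rw [Bb_of_lt q (by omega), Bb_of_lt q h]
    ring

lemma keyC (q : ℂ) (hq : ‖q‖ < 1) (n m k : ℕ) (hm : n + 2 ≤ m) :
    Cc q m (n + 2) (k + 1) =
      Cc q m (n + 1) (k + 1) + Cc q m (n + 1) k * (1 - q ^ (n + 1 + m - 2 * k)) -
        (1 - q ^ (n + 1)) * Cc q m n k := by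
  rcases (by omega : k ≤ n + 1 ∨ n + 2 ≤ k) with h | h
  · have p1 := pascal1 q hq (n + 1) k
    have p2 := Bb_shift q hq (n + 1) k
    rw [Nat.add_sub_cancel] at p2
    have p3 := auxM q hq m k
    have hpow : q ^ (n + 1 - k) * q ^ (m - k) = q ^ (n + 1 + m - 2 * k) := by
      rw [← pow_add]
      congr 1
      omega
    unfold Cc
    linear_combination (Bb q m (k + 1) * qPoch q q (k + 1)) * p1 +
      (q ^ (n + 1 - k) * Bb q (n + 1) k) * p3 -
      (Bb q m k * qPoch q q k) * p2 -
      (Bb q (n + 1) k * Bb q m k * qPoch q q k) * hpow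
  · rw [Cc_of_lt q (by omega : n + 2 < k + 1), Cc_of_lt q (by omega : n + 1 < k + 1),
      Cc_of_lt q (by omega : n + 1 < k), Cc_of_lt q (by omega : n < k)]
    ring

lemma lin (q x : ℂ) (hq : ‖q‖ < 1) (n : ℕ) : ∀ m : ℕ, n ≤ m →
    ∑ k ∈ Finset.range (n + 1), Cc q m n k * x ^ k * hRS q x (n + m - 2 * k) =
      hRS q x n * hRS q x m := by
  induction n using Nat.twoStepInduction with
  | zero =>
    intro m hm
    rw [Finset.sum_range_one, Cc_zero q hq, Bb_zero q hq, hRS_zero q x hq]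
    norm_num
  | one =>
    intro m hm
    rw [Finset.sum_range_succ, Finset.sum_range_one]
    have e0 : Cc q m 1 0 = 1 := by rw [Cc_zero q hq, Bb_zero q hq]; norm_num
    have c11 : Cc q m 1 1 = 1 - q ^ m := by
      have h0 := auxM q hq m 0
      norm_num [qPoch_zero, Bb_zero q hq] at h0
      unfold Cc
      rw [Bb_self q hq]
      linear_combination h0
    rw [show 1 + m - 2 * 0 = m + 1 from by omega, show 1 + m - 2 * 1 = m - 1 from by omega,
      e0, c11, hRS_one q x hq]
    linear_combination hRS_rec q x hq m
  | more n ih1 ih2 =>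
    intro m hm
    have IH1 := ih1 m (by omega)
    have IH2 := ih2 m (by omega)
    have hrec := hRS_rec q x hq (n + 1)
    rw [Nat.add_sub_cancel, show n + 1 + 1 = n + 2 from by omega] at hrec
    -- padded IH sums
    have pad2 : ∑ k ∈ Finset.range (n + 3),
        Cc q m (n + 1) k * x ^ k * hRS q x (n + 1 + m - 2 * k) =
        hRS q x (n + 1) * hRS q x m := by
      rw [← IH2]
      symm
      apply Finset.sum_subset (Finset.range_subset_range.2 (by omega))
      intro k _ hk
      rw [Cc_of_lt q (show n + 1 < k by simpa using hk), zero_mul, zero_mul]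
    have pad1 : ∑ k ∈ Finset.range (n + 3),
        Cc q m n k * x ^ k * hRS q x (n + m - 2 * k) =
        hRS q x n * hRS q x m := by
      rw [← IH1]
      symm
      apply Finset.sum_subset (Finset.range_subset_range.2 (by omega))
      intro k _ hk
      rw [Cc_of_lt q (show n < k by simpa using hk), zero_mul, zero_mul]
    have tw : ∀ k ∈ Finset.range (n + 3),
        Cc q m (n + 1) k * x ^ k * hRS q x (n + 2 + m - 2 * k) +
          (Cc q m (n + 1) k * (1 - q ^ (n + 1 + m - 2 * k)) -
            (1 - q ^ (n + 1)) * Cc q m n k) * x ^ (k + 1) * hRS q x (n + m - 2 * k) =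
        (1 + x) * (Cc q m (n + 1) k * x ^ k * hRS q x (n + 1 + m - 2 * k)) -
          (1 - q ^ (n + 1)) * x * (Cc q m n k * x ^ k * hRS q x (n + m - 2 * k)) := by
      intro k hk
      have hk3 : k < n + 3 := Finset.mem_range.1 hk
      rcases (by omega : 2 * k ≤ n + 1 + m ∨ (k = n + 2 ∧ m = n + 2)) with hc | ⟨rfl, rfl⟩
      · have hr := hRS_rec q x hq (n + 1 + m - 2 * k)
        rw [show n + 1 + m - 2 * k + 1 = n + 2 + m - 2 * k from by omega,
          show n + 1 + m - 2 * k - 1 = n + m - 2 * k from by omega] at hr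
        linear_combination (Cc q m (n + 1) k * x ^ k) * hr
      · rw [Cc_of_lt q (by omega : n + 1 < n + 2), Cc_of_lt q (by omega : n < n + 2)]
        ring
    have keyS : ∀ k ∈ Finset.range (n + 3),
        Cc q m (n + 2) (k + 1) * x ^ (k + 1) * hRS q x (n + 2 + m - 2 * (k + 1)) =
        Cc q m (n + 1) (k + 1) * x ^ (k + 1) * hRS q x (n + 2 + m - 2 * (k + 1)) +
          (Cc q m (n + 1) k * (1 - q ^ (n + 1 + m - 2 * k)) -
            (1 - q ^ (n + 1)) * Cc q m n k) * x ^ (k + 1) * hRS q x (n + m - 2 * k) := by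
      intro k _
      rw [show n + 2 + m - 2 * (k + 1) = n + m - 2 * k from by omega, keyC q hq n m k hm]
      ring
    calc ∑ k ∈ Finset.range (n + 2 + 1), Cc q m (n + 2) k * x ^ k * hRS q x (n + 2 + m - 2 * k)
        = ∑ k ∈ Finset.range (n + 4), Cc q m (n + 2) k * x ^ k * hRS q x (n + 2 + m - 2 * k) := by
          apply Finset.sum_subset (Finset.range_subset_range.2 (by omega))
          intro k _ hk
          rw [Cc_of_lt q (show n + 2 < k by simpa using hk), zero_mul, zero_mul]
      _ = (∑ k ∈ Finset.range (n + 3),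
            Cc q m (n + 2) (k + 1) * x ^ (k + 1) * hRS q x (n + 2 + m - 2 * (k + 1))) +
            Cc q m (n + 2) 0 * x ^ 0 * hRS q x (n + 2 + m - 2 * 0) :=
          Finset.sum_range_succ' _ (n + 3)
      _ = (∑ k ∈ Finset.range (n + 3),
            (Cc q m (n + 1) (k + 1) * x ^ (k + 1) * hRS q x (n + 2 + m - 2 * (k + 1)) +
              (Cc q m (n + 1) k * (1 - q ^ (n + 1 + m - 2 * k)) -
                (1 - q ^ (n + 1)) * Cc q m n k) * x ^ (k + 1) * hRS q x (n + m - 2 * k))) +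
            Cc q m (n + 1) 0 * x ^ 0 * hRS q x (n + 2 + m - 2 * 0) := by
          rw [Finset.sum_congr rfl keyS, Cc_zero q hq, Cc_zero q hq]
      _ = ((∑ k ∈ Finset.range (n + 3),
            Cc q m (n + 1) (k + 1) * x ^ (k + 1) * hRS q x (n + 2 + m - 2 * (k + 1))) +
            Cc q m (n + 1) 0 * x ^ 0 * hRS q x (n + 2 + m - 2 * 0)) +
            ∑ k ∈ Finset.range (n + 3),
              (Cc q m (n + 1) k * (1 - q ^ (n + 1 + m - 2 * k)) -
                (1 - q ^ (n + 1)) * Cc q m n k) * x ^ (k + 1) * hRS q x (n + m - 2 * k) := by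
          rw [Finset.sum_add_distrib]
          ring
      _ = (∑ k ∈ Finset.range (n + 4),
            Cc q m (n + 1) k * x ^ k * hRS q x (n + 2 + m - 2 * k)) +
            ∑ k ∈ Finset.range (n + 3),
              (Cc q m (n + 1) k * (1 - q ^ (n + 1 + m - 2 * k)) -
                (1 - q ^ (n + 1)) * Cc q m n k) * x ^ (k + 1) * hRS q x (n + m - 2 * k) := by
          rw [Finset.sum_range_succ'
            (fun k => Cc q m (n + 1) k * x ^ k * hRS q x (n + 2 + m - 2 * k)) (n + 3)]
      _ = (∑ k ∈ Finset.range (n + 3),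
            Cc q m (n + 1) k * x ^ k * hRS q x (n + 2 + m - 2 * k)) +
            ∑ k ∈ Finset.range (n + 3),
              (Cc q m (n + 1) k * (1 - q ^ (n + 1 + m - 2 * k)) -
                (1 - q ^ (n + 1)) * Cc q m n k) * x ^ (k + 1) * hRS q x (n + m - 2 * k) := by
          congr 1
          symm
          apply Finset.sum_subset (Finset.range_subset_range.2 (by omega))
          intro k _ hk
          rw [Cc_of_lt q (show n + 1 < k by simp at hk; omega), zero_mul, zero_mul]
      _ = ∑ k ∈ Finset.range (n + 3),
            (Cc q m (n + 1) k * x ^ k * hRS q x (n + 2 + m - 2 * k) +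
              (Cc q m (n + 1) k * (1 - q ^ (n + 1 + m - 2 * k)) -
                (1 - q ^ (n + 1)) * Cc q m n k) * x ^ (k + 1) * hRS q x (n + m - 2 * k)) := by
          rw [Finset.sum_add_distrib]
      _ = ∑ k ∈ Finset.range (n + 3),
            ((1 + x) * (Cc q m (n + 1) k * x ^ k * hRS q x (n + 1 + m - 2 * k)) -
              (1 - q ^ (n + 1)) * x * (Cc q m n k * x ^ k * hRS q x (n + m - 2 * k))) :=
          Finset.sum_congr rfl tw
      _ = (1 + x) * (∑ k ∈ Finset.range (n + 3),
            Cc q m (n + 1) k * x ^ k * hRS q x (n + 1 + m - 2 * k)) -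
            (1 - q ^ (n + 1)) * x * ∑ k ∈ Finset.range (n + 3),
              Cc q m n k * x ^ k * hRS q x (n + m - 2 * k) := by
          rw [Finset.sum_sub_distrib, Finset.mul_sum, Finset.mul_sum]
      _ = hRS q x (n + 2) * hRS q x m := by
          rw [pad2, pad1]
          linear_combination -hRS q x m * hrec


/-- Factorization of the classical linearization sum (Corollary 3.5). -/
theorem linearization_sum_factorization (q x y : ℂ) (hq : ‖q‖ < 1) (n m : ℕ) :
    ∑ k ∈ Finset.range (min n m + 1),
      qBinom q n k * qBinom q m k * qPoch q q k * x ^ k * hRS q x (n + m - 2 * k) =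
      (∑ k ∈ Finset.range (n + 1), qBinom q n k * y ^ k * hRS2 q x y (n - k)) *
        (∑ j ∈ Finset.range (m + 1), qBinom q m j * y ^ j * hRS2 q x y (m - j)) := by
  rw [factorA q x y hq n, factorA q x y hq m]
  rcases le_total n m with h | h
  · rw [min_eq_left h, ← lin q x hq n m h]
    refine Finset.sum_congr rfl fun k hk => ?_
    have hkn : k ≤ n := Nat.lt_succ_iff.1 (Finset.mem_range.1 hk)
    unfold Cc
    rw [Bb_eq_qBinom q hkn, Bb_eq_qBinom q (by omega : k ≤ m)]
  · rw [min_eq_right h, mul_comm (hRS q x n), ← lin q x hq m n h]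
    refine Finset.sum_congr rfl fun k hk => ?_
    have hkm : k ≤ m := Nat.lt_succ_iff.1 (Finset.mem_range.1 hk)
    unfold Cc
    rw [Bb_eq_qBinom q hkm, Bb_eq_qBinom q (by omega : k ≤ n),
      show m + n - 2 * k = n + m - 2 * k from by omega]
    ring
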